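/- arXiv:1909.04653 — 3 statements merged into one kernel-verified Lean document; each statement's English description precedes it below -/
import Mathlib

section
/- (Lemma: linear convergence of w_t.) Assume the shortcut prior v* = 𝟙/√p + w* with ‖w*‖₂ ≤ 1 and let 0 < m ≤ M. Let (w_t, a_t) be the gradient descent iterates with normalization with η_w = η ≤ m/(2M²), φ_0 ≤ 5π/12, and suppose m ≤ a_tᵀa* ≤ M for all t ≥ 0. Then there is an absolute constant c > 0 such that for every δ > 0 and every t ≥ (c/(mη))·log(4/δ), one has ‖w_t − w*‖₂² ≤ δ. -/
open Real
open scoped BigOperators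

noncomputable section

/-- Euclidean dot product on `ℝ^n`. -/
def dotp {n : ℕ} (u v : Fin n → ℝ) : ℝ := ∑ i, u i * v i

/-- Euclidean norm `‖u‖₂` on `ℝ^n`. -/
def nrm {n : ℕ} (u : Fin n → ℝ) : ℝ := Real.sqrt (dotp u u)

/-- The shortcut vector `𝟙/√p ∈ ℝ^p`. -/
def sc (p : ℕ) : Fin p → ℝ := fun _ => 1 / Real.sqrt p

/-- The angle kernel `g(φ) = (π − φ)cos φ + sin φ`. -/
def gker (φ : ℝ) : ℝ := (π - φ) * Real.cos φ + Real.sin φ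

/-- The angle `φ(w) = arccos((𝟙/√p + w)ᵀ v*)`. -/
def phiAngle {p : ℕ} (vstar w : Fin p → ℝ) : ℝ := Real.arccos (dotp (sc p + w) vstar)

/-- Population gradient map with respect to the output weight `a`:
`G_a(w,a) = (1/(2π))(𝟙𝟙ᵀ + (π−1)I)a − (1/(2π))(𝟙𝟙ᵀ + (g(φ(w))−1)I)a*`. -/
def Ga {p k : ℕ} (vstar : Fin p → ℝ) (astar : Fin k → ℝ)
    (w : Fin p → ℝ) (a : Fin k → ℝ) : Fin k → ℝ :=
  fun i => (1 / (2 * π)) * ((∑ j, a j) + (π - 1) * a i)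
    - (1 / (2 * π)) * ((∑ j, astar j) + (gker (phiAngle vstar w) - 1) * astar i)

/-- Population gradient map with respect to the convolutional weight `w`:
`G_w(w,a) = −((aᵀa*)(π − φ(w))/(2π))(I − vvᵀ)v*`, where `v = 𝟙/√p + w`. -/
def Gw {p k : ℕ} (vstar : Fin p → ℝ) (astar : Fin k → ℝ)
    (w : Fin p → ℝ) (a : Fin k → ℝ) : Fin p → ℝ :=
  fun i => -(dotp a astar * (π - phiAngle vstar w) / (2 * π))
    * (vstar i - dotp (sc p + w) vstar * (sc p + w) i)

/-- One gradient descent step on `w` followed by the normalization step: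
`w̃⁺ = w − η_w G_w(w,a)`, `w⁺ = (𝟙/√p + w̃⁺)/‖𝟙/√p + w̃⁺‖₂ − 𝟙/√p`. -/
def wStep {p k : ℕ} (vstar : Fin p → ℝ) (astar : Fin k → ℝ) (ηw : ℝ)
    (wt : Fin p → ℝ) (at' : Fin k → ℝ) : Fin p → ℝ :=
  (nrm (sc p + (wt - ηw • Gw vstar astar wt at')))⁻¹ •
    (sc p + (wt - ηw • Gw vstar astar wt at')) - sc p

/-- One gradient descent step on `a`: `a⁺ = a − η_a G_a(w,a)`. -/
def aStep {p k : ℕ} (vstar : Fin p → ℝ) (astar : Fin k → ℝ) (ηa : ℝ)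
    (wt : Fin p → ℝ) (at' : Fin k → ℝ) : Fin k → ℝ :=
  at' - ηa • Ga vstar astar wt at'

/- ### Auxiliary lemmas -/

lemma dotp_add_left' {n : ℕ} (u v w : Fin n → ℝ) : dotp (u + v) w = dotp u w + dotp v w := by
  simp [dotp, add_mul, Finset.sum_add_distrib]
lemma dotp_sub_left' {n : ℕ} (u v w : Fin n → ℝ) : dotp (u - v) w = dotp u w - dotp v w := by
  simp [dotp, sub_mul, Finset.sum_sub_distrib]
lemma dotp_smul_left' {n : ℕ} (r : ℝ) (u v : Fin n → ℝ) : dotp (r • u) v = r * dotp u v := by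
  simp [dotp, Finset.mul_sum, mul_assoc]
lemma dotp_comm' {n : ℕ} (u v : Fin n → ℝ) : dotp u v = dotp v u := by
  simp [dotp, mul_comm]
lemma dotp_add_right' {n : ℕ} (u v w : Fin n → ℝ) : dotp u (v + w) = dotp u v + dotp u w := by
  rw [dotp_comm', dotp_add_left', dotp_comm' v u, dotp_comm' w u]
lemma dotp_sub_right' {n : ℕ} (u v w : Fin n → ℝ) : dotp u (v - w) = dotp u v - dotp u w := by
  rw [dotp_comm', dotp_sub_left', dotp_comm' v u, dotp_comm' w u]
lemma dotp_smul_right' {n : ℕ} (r : ℝ) (u v : Fin n → ℝ) : dotp u (r • v) = r * dotp u v := by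
  rw [dotp_comm', dotp_smul_left', dotp_comm' v u]
lemma dotp_self_nonneg' {n : ℕ} (u : Fin n → ℝ) : 0 ≤ dotp u u :=
  Finset.sum_nonneg fun _ _ => mul_self_nonneg _

lemma unit_dotp_bounds' {n : ℕ} (u v : Fin n → ℝ) (hu : dotp u u = 1) (hv : dotp v v = 1) :
    -1 ≤ dotp u v ∧ dotp u v ≤ 1 := by
  have h1 := dotp_self_nonneg' (u - v)
  have h2 := dotp_self_nonneg' (u + v)
  rw [dotp_sub_left', dotp_sub_right', dotp_sub_right', dotp_comm' v u, hu, hv] at h1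
  rw [dotp_add_left', dotp_add_right', dotp_add_right', dotp_comm' v u, hu, hv] at h2
  constructor <;> linarith

lemma nrm_one_iff' {n : ℕ} (u : Fin n → ℝ) (h : nrm u = 1) : dotp u u = 1 := by
  have h0 := dotp_self_nonneg' u
  have := congrArg (fun x => x ^ 2) h
  simpa [nrm, Real.sq_sqrt h0] using this

lemma scalar_step' (c s : ℝ) (hc0 : 0 ≤ c) (hc1 : c ≤ 1) (hs0 : 0 ≤ s) (hs1 : s ≤ 1/4) :
    1 - (c + s*(1-c^2)) / Real.sqrt (1 + s^2*(1-c^2)) ≤ (1 - 7*s/8) * (1 - c) := by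
  set u : ℝ := 1 - c^2 with hu_def
  clear_value u
  have hu0 : 0 ≤ u := by nlinarith
  have hu1 : u ≤ 1 := by nlinarith
  have hX : (1:ℝ) ≤ 1 + s^2*u := by nlinarith
  have hX0 : (0:ℝ) < 1 + s^2*u := by linarith
  have hN1 : 1 ≤ Real.sqrt (1 + s^2*u) := by
    have := Real.sqrt_le_sqrt hX
    rwa [Real.sqrt_one] at this
  have hN0 : 0 < Real.sqrt (1 + s^2*u) := by linarith
  have hsq : Real.sqrt (1 + s^2*u) ^ 2 = 1 + s^2*u := Real.sq_sqrt hX0.le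
  have hA0 : 0 ≤ c + s*u := by positivity
  have hnum : c + s*u ≤ Real.sqrt (1 + s^2*u) := by
    nlinarith [sq_nonneg (1 - s*c), mul_nonneg (mul_nonneg hu0 hs0) hs0,
      sq_nonneg (Real.sqrt (1 + s^2*u) - (c + s*u)), sq_nonneg (Real.sqrt (1 + s^2*u) + (c + s*u)),
      mul_nonneg hu0 (sq_nonneg (1 - s*c))]
  have hNle : Real.sqrt (1 + s^2*u) ≤ 1 + s^2*u/2 := by
    have h2 : (1 + s^2*u) ≤ (1 + s^2*u/2)^2 := by
      nlinarith [sq_nonneg (s^2*u), sq_nonneg (s*u), mul_nonneg (mul_nonneg hs0 hs0) hu0]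
    have := Real.sqrt_le_sqrt h2
    rwa [Real.sqrt_sq (by positivity)] at this
  have key : 1 - (c + s*u) / Real.sqrt (1 + s^2*u) ≤ Real.sqrt (1 + s^2*u) - (c + s*u) := by
    rw [show 1 - (c + s*u) / Real.sqrt (1 + s^2*u)
        = (Real.sqrt (1 + s^2*u) - (c + s*u)) / Real.sqrt (1 + s^2*u) by
      field_simp]
    exact div_le_self (by linarith) hN1
  have hfin : Real.sqrt (1 + s^2*u) - (c + s*u) ≤ (1 - 7*s/8) * (1 - c) := by
    have huc : (1 - c) ≤ u := by nlinarith
    nlinarith [mul_nonneg hs0 (sub_nonneg.mpr huc), mul_nonneg hs0 hu0,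
      mul_nonneg (mul_nonneg hs0 hs0) hu0]
  linarith

/-- The perturbed vector in one `w`-step, written in closed form. -/
lemma tilde_eq {p k : ℕ} (vstar : Fin p → ℝ) (astar : Fin k → ℝ) (η : ℝ)
    (wt : Fin p → ℝ) (at' : Fin k → ℝ) :
    sc p + (wt - η • Gw vstar astar wt at')
      = (sc p + wt) + (η * (dotp at' astar * (π - Real.arccos (dotp (sc p + wt) vstar)) / (2*π)))
          • (vstar - (dotp (sc p + wt) vstar) • (sc p + wt)) := by
  funext i
  simp only [Gw, phiAngle, Pi.add_apply, Pi.sub_apply, Pi.smul_apply, smul_eq_mul]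
  ring

lemma sc_add_wStep {p k : ℕ} (vstar : Fin p → ℝ) (astar : Fin k → ℝ) (η : ℝ)
    (wt : Fin p → ℝ) (at' : Fin k → ℝ) :
    sc p + wStep vstar astar η wt at'
      = (nrm (sc p + (wt - η • Gw vstar astar wt at')))⁻¹ •
          (sc p + (wt - η • Gw vstar astar wt at')) := by
  simp [wStep]

/-- Dot products of the perturbed vector. -/
lemma perturb_dotp {p : ℕ} (v vstar : Fin p → ℝ) (s c : ℝ)
    (hv : dotp v v = 1) (hstar : dotp vstar vstar = 1) (hc : dotp v vstar = c) :
    dotp (v + s • (vstar - c • v)) (v + s • (vstar - c • v)) = 1 + s^2*(1 - c^2) ∧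
    dotp (v + s • (vstar - c • v)) vstar = c + s*(1 - c^2) := by
  have hc' : dotp vstar v = c := by rw [dotp_comm']; exact hc
  constructor
  · simp only [dotp_add_left', dotp_add_right', dotp_smul_left', dotp_smul_right',
      dotp_sub_left', dotp_sub_right', hv, hstar, hc, hc']
    ring
  · simp only [dotp_add_left', dotp_smul_left', dotp_sub_left', hstar, hc, hc']
    ring

set_option maxHeartbeats 800000 in
/-- Lemma: linear convergence of `w_t`. There is an absolute constant `c > 0` such
that, under the shortcut prior, with `η_w = η ≤ m/(2M²)`, `φ_0 ≤ 5π/12`, and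
`m ≤ a_tᵀa* ≤ M` for all `t`, one has `‖w_t − w*‖₂² ≤ δ` for every `δ > 0` and
every `t ≥ (c/(mη))log(4/δ)`. -/
theorem stmt14 :
    ∃ c > (0 : ℝ),
      ∀ (p k : ℕ), 0 < p → 0 < k →
      ∀ (vstar wstar : Fin p → ℝ) (astar : Fin k → ℝ),
        nrm vstar = 1 → vstar = sc p + wstar → nrm wstar ≤ 1 →
      ∀ m M : ℝ, 0 < m → m ≤ M →
      ∀ η ηa : ℝ, 0 < η → 0 < ηa → η ≤ m / (2 * M ^ 2) →
      ∀ (w : ℕ → Fin p → ℝ) (a : ℕ → Fin k → ℝ),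
        nrm (sc p + w 0) = 1 →
        phiAngle vstar (w 0) ≤ 5 * π / 12 →
        (∀ t, w (t + 1) = wStep vstar astar η (w t) (a t)) →
        (∀ t, a (t + 1) = aStep vstar astar ηa (w t) (a t)) →
        (∀ t, m ≤ dotp (a t) astar ∧ dotp (a t) astar ≤ M) →
      ∀ δ : ℝ, 0 < δ →
      ∀ t : ℕ, (c / (m * η)) * Real.log (4 / δ) ≤ (t : ℝ) →
        dotp (w t - wstar) (w t - wstar) ≤ δ := by
  refine ⟨4, by norm_num, ?_⟩
  intro p k hp hk vstar wstar astar hvnrm hvsc hwnrm m M hm hmM η ηa hη hηa hηle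
    w a hw0 hφ0 hwstep hastep hab δ hδ t ht
  have hπ := Real.pi_pos
  have hM : 0 < M := lt_of_lt_of_le hm hmM
  -- basic facts
  have hstar : dotp vstar vstar = 1 := nrm_one_iff' _ hvnrm
  have hmη : m * η ≤ 1 / 2 := by
    have h1 : η * (2 * M ^ 2) ≤ m := by
      rw [← le_div_iff₀ (by positivity)]; exact hηle
    nlinarith [mul_le_mul_of_nonneg_left h1 hm.le, pow_pos hM 2, sq_nonneg (M - m),
      mul_pos hm hη]
  have hρ : m * η / 4 ≤ 1 / 8 := by linarith
  have hρ0 : 0 < m * η / 4 := by positivity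
  set K : ℝ := Real.cos (5 * π / 12) with hK_def
  clear_value K
  have hK0 : 0 < K := by
    rw [hK_def]
    apply Real.cos_pos_of_mem_Ioo
    constructor <;> [linarith; linarith]
  have hK1 : K ≤ 1 := by rw [hK_def]; exact Real.cos_le_one _
  -- the invariant
  have inv : ∀ t, dotp (sc p + w t) (sc p + w t) = 1 ∧ K ≤ dotp (sc p + w t) vstar ∧
      1 - dotp (sc p + w t) vstar ≤ (1 - m*η/4)^t * 2 := by
    intro t
    induction t with
    | zero =>
      have hunit : dotp (sc p + w 0) (sc p + w 0) = 1 := nrm_one_iff' _ hw0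
      have hb := unit_dotp_bounds' (sc p + w 0) vstar hunit hstar
      have hKle : K ≤ dotp (sc p + w 0) vstar := by
        have hcos : Real.cos (Real.arccos (dotp (sc p + w 0) vstar)) = dotp (sc p + w 0) vstar :=
          Real.cos_arccos hb.1 hb.2
        have := Real.cos_le_cos_of_nonneg_of_le_pi (Real.arccos_nonneg _)
          (by linarith : 5 * π / 12 ≤ π) hφ0
        rw [hcos] at this
        rw [hK_def]
        exact this
      exact ⟨hunit, hKle, by simp only [pow_zero, one_mul]; linarith [hb.1]⟩
    | succ t ih =>
      obtain ⟨hunit, hKle, hcontr⟩ := ih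
      set c : ℝ := dotp (sc p + w t) vstar with hc_def
      clear_value c
      have hb := unit_dotp_bounds' (sc p + w t) vstar hunit hstar
      have hc1 : c ≤ 1 := by rw [hc_def]; exact hb.2
      have hc0 : 0 ≤ c := le_trans hK0.le hKle
      -- angle bound
      have hφle : Real.arccos c ≤ 5 * π / 12 := by
        have h1 : Real.arccos c ≤ Real.arccos K := by
          rw [Real.arccos, Real.arccos]
          have := Real.monotone_arcsin hKle
          linarith
        have h2 : Real.arccos K = 5 * π / 12 := by
          rw [hK_def]
          exact Real.arccos_cos (by positivity) (by linarith)
        rw [h2] at h1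
        exact h1
      have hφ0' : 0 ≤ Real.arccos c := Real.arccos_nonneg _
      -- the effective step size
      set lam : ℝ := dotp (a t) astar * (π - Real.arccos c) / (2*π) with hlam_def
      clear_value lam
      have hA := hab t
      have hlam_lb : 7 * m / 24 ≤ lam := by
        rw [hlam_def, le_div_iff₀ (by positivity)]
        nlinarith [hA.1, mul_le_mul_of_nonneg_left hφle (le_trans hm.le hA.1)]
      have hlam_ub : lam ≤ M / 2 := by
        rw [hlam_def, div_le_iff₀ (by positivity)]
        nlinarith [hA.2, mul_le_mul_of_nonneg_left hφ0' (le_trans hm.le hA.1)]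
      set s : ℝ := η * lam with hs_def
      clear_value s
      have hlam0 : 0 ≤ lam := le_trans (by positivity) hlam_lb
      have hs0 : 0 ≤ s := by
        rw [hs_def]; exact mul_nonneg hη.le hlam0
      have hs1 : s ≤ 1/4 := by
        have : s ≤ η * (M/2) := by
          rw [hs_def]; exact mul_le_mul_of_nonneg_left hlam_ub hη.le
        have h2 : η * (M/2) ≤ (m / (2*M^2)) * (M/2) :=
          mul_le_mul_of_nonneg_right hηle (by positivity)
        have h3 : (m / (2*M^2)) * (M/2) = m / (4*M) := by field_simp; ring
        have h4 : m / (4*M) ≤ 1/4 := by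
          rw [div_le_iff₀ (by positivity)]
          nlinarith
        linarith
      have hs_lb : 7 * m * η / 24 ≤ s := by
        rw [hs_def]
        calc 7 * m * η / 24 = η * (7*m/24) := by ring
        _ ≤ η * lam := mul_le_mul_of_nonneg_left hlam_lb hη.le
      -- the perturbed vector
      have htil := tilde_eq vstar astar η (w t) (a t)
      rw [← hc_def, ← hlam_def, ← hs_def] at htil
      obtain ⟨hd1, hd2⟩ := perturb_dotp (sc p + w t) vstar s c hunit hstar hc_def.symm
      have hX0 : (0:ℝ) < 1 + s^2*(1-c^2) := by
        have : 0 ≤ s^2*(1-c^2) := mul_nonneg (sq_nonneg s) (by nlinarith)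
        linarith
      have hnrm_til : nrm (sc p + (w t - η • Gw vstar astar (w t) (a t)))
          = Real.sqrt (1 + s^2*(1-c^2)) := by
        rw [nrm, htil, hd1]
      have hN0 : 0 < Real.sqrt (1 + s^2*(1-c^2)) := Real.sqrt_pos.mpr hX0
      have hsq : Real.sqrt (1 + s^2*(1-c^2)) ^ 2 = 1 + s^2*(1-c^2) := Real.sq_sqrt hX0.le
      -- the next iterate
      have hnext : sc p + w (t+1)
          = (Real.sqrt (1 + s^2*(1-c^2)))⁻¹ • ((sc p + w t) + s • (vstar - c • (sc p + w t))) := by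
        rw [hwstep t, sc_add_wStep, hnrm_til, htil]
      have hcnext : dotp (sc p + w (t+1)) vstar
          = (c + s*(1-c^2)) / Real.sqrt (1 + s^2*(1-c^2)) := by
        rw [hnext, dotp_smul_left', hd2, inv_mul_eq_div]
      have hunit' : dotp (sc p + w (t+1)) (sc p + w (t+1)) = 1 := by
        rw [hnext, dotp_smul_left', dotp_smul_right', hd1]
        field_simp
        exact hsq.symm
      -- the scalar step
      have hstep := scalar_step' c s hc0 hc1 hs0 hs1
      rw [← hcnext] at hstep
      have hfac0 : 0 ≤ 1 - 7*s/8 := by linarith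
      have hfac1 : 1 - 7*s/8 ≤ 1 - m*η/4 := by linarith
      have h1c : 0 ≤ 1 - c := by linarith
      have hKnext : K ≤ dotp (sc p + w (t+1)) vstar := by
        have : (1 - 7*s/8) * (1-c) ≤ 1 - c :=
          mul_le_of_le_one_left h1c (by linarith)
        linarith
      refine ⟨hunit', hKnext, ?_⟩
      have hmono : (1 - 7*s/8) * (1-c) ≤ (1 - m*η/4) * (1 - c) :=
        mul_le_mul_of_nonneg_right hfac1 h1c
      calc 1 - dotp (sc p + w (t+1)) vstar ≤ (1 - m*η/4) * (1 - c) := by linarith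
      _ ≤ (1 - m*η/4) * ((1 - m*η/4)^t * 2) :=
          mul_le_mul_of_nonneg_left hcontr (by linarith)
      _ = (1 - m*η/4)^(t+1) * 2 := by ring
  -- conclude
  obtain ⟨hunit, hKle, hcontr⟩ := inv t
  have hb := unit_dotp_bounds' (sc p + w t) vstar hunit hstar
  have hgoal_eq : dotp (w t - wstar) (w t - wstar) = 2 - 2 * dotp (sc p + w t) vstar := by
    have hww : w t - wstar = (sc p + w t) - vstar := by
      funext i
      have : vstar i = sc p i + wstar i := by rw [hvsc]; rfl
      simp [this]
    rw [hww, dotp_sub_left', dotp_sub_right', dotp_sub_right', hunit, hstar,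
      dotp_comm' vstar (sc p + w t)]
    ring
  rw [hgoal_eq]
  by_cases hδ4 : 4 ≤ δ
  · linarith [hKle, hK0]
  · push_neg at hδ4
    have hL : 0 < Real.log (4/δ) := Real.log_pos (by rw [lt_div_iff₀ hδ]; linarith)
    have hpow : (1 - m*η/4)^t ≤ Real.exp (-(m*η/4) * t) := by
      have h1 : (1 - m*η/4) ≤ Real.exp (-(m*η/4)) := by
        have := Real.add_one_le_exp (-(m*η/4))
        linarith
      calc (1 - m*η/4)^t ≤ (Real.exp (-(m*η/4)))^t :=
          pow_le_pow_left₀ (by linarith) h1 t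
      _ = Real.exp (-(m*η/4) * t) := by
          rw [← Real.exp_nat_mul]; ring_nf
    have htρ : Real.log (4/δ) ≤ (m*η/4) * t := by
      have h1 : (4 / (m*η)) * Real.log (4/δ) ≤ t := ht
      have h2 : (m*η/4) * ((4/(m*η)) * Real.log (4/δ)) = Real.log (4/δ) := by
        field_simp
      calc Real.log (4/δ) = (m*η/4) * ((4/(m*η)) * Real.log (4/δ)) := h2.symm
      _ ≤ (m*η/4) * t := mul_le_mul_of_nonneg_left h1 hρ0.le
    have hexp : Real.exp (-(m*η/4) * t) ≤ δ / 4 := by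
      have h1 : Real.exp (-(m*η/4) * t) ≤ Real.exp (-Real.log (4/δ)) := by
        apply Real.exp_le_exp.mpr
        linarith
      have h2 : Real.exp (-Real.log (4/δ)) = δ / 4 := by
        rw [Real.exp_neg, Real.exp_log (by positivity)]
        field_simp
      linarith
    have : 1 - dotp (sc p + w t) vstar ≤ δ / 2 := by
      calc 1 - dotp (sc p + w t) vstar ≤ (1 - m*η/4)^t * 2 := hcontr
      _ ≤ Real.exp (-(m*η/4) * t) * 2 := by linarith [hpow]
      _ ≤ (δ/4) * 2 := by linarith [hexp]
      _ = δ / 2 := by ring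
    linarith
end
end

section
/- (Theorem, Stage II: convergence to the global optimum.) Assume the shortcut prior v* = 𝟙/√p + w* with ‖w*‖₂ ≤ 1 and a* ≠ 0. Set m = (1/5)‖a*‖₂² and M = 3‖a*‖₂² + 2(𝟙ᵀa*)². Let (w_t, a_t) be the gradient descent iterates with normalization with equal step sizes η_w = η_a = η = min{m/(2M²), 5π²/(4(k+π−1)²)}, φ_0 ≤ 5π/12, and suppose m ≤ a_tᵀa* ≤ M for all t ≥ 0. Then there are constants C, c > 0 depending only on ‖a*‖₂ and |𝟙ᵀa*| (the paper gives C = 5) such that for every δ > 0 and all t ≥ (c/η)·log(C′/δ) with C′ = max{4, ‖a_0 − a*‖₂²}, one has ‖w_t − w*‖₂² ≤ δ and ‖a_t − a*‖₂² ≤ Cδ. -/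
open Real
open scoped BigOperators

noncomputable section

namespace SAux
variable {n : ℕ}
lemma dotp_comm (u v : Fin n → ℝ) : dotp u v = dotp v u := by simp [dotp, mul_comm]
lemma dotp_add_left (u v x : Fin n → ℝ) : dotp (u + v) x = dotp u x + dotp v x := by
  simp [dotp, add_mul, Finset.sum_add_distrib]
lemma dotp_sub_left (u v x : Fin n → ℝ) : dotp (u - v) x = dotp u x - dotp v x := by
  simp [dotp, sub_mul, Finset.sum_sub_distrib]
lemma dotp_smul_left (r : ℝ) (u x : Fin n → ℝ) : dotp (r • u) x = r * dotp u x := by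
  simp [dotp, Finset.mul_sum, mul_assoc]
lemma dotp_add_right (u v x : Fin n → ℝ) : dotp x (u + v) = dotp x u + dotp x v := by
  rw [dotp_comm, dotp_add_left, dotp_comm u x, dotp_comm v x]
lemma dotp_sub_right (u v x : Fin n → ℝ) : dotp x (u - v) = dotp x u - dotp x v := by
  rw [dotp_comm, dotp_sub_left, dotp_comm u x, dotp_comm v x]
lemma dotp_smul_right (r : ℝ) (u x : Fin n → ℝ) : dotp x (r • u) = r * dotp x u := by
  rw [dotp_comm, dotp_smul_left, dotp_comm u x]
lemma dotp_self_nonneg (u : Fin n → ℝ) : 0 ≤ dotp u u :=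
  Finset.sum_nonneg fun i _ => mul_self_nonneg _
lemma nrm_nonneg (u : Fin n → ℝ) : 0 ≤ nrm u := Real.sqrt_nonneg _
lemma nrm_sq (u : Fin n → ℝ) : nrm u ^ 2 = dotp u u := Real.sq_sqrt (dotp_self_nonneg u)
lemma dotp_self_pos {u : Fin n → ℝ} (h : u ≠ 0) : 0 < dotp u u := by
  obtain ⟨i, hi⟩ := Function.ne_iff.1 h
  exact Finset.sum_pos' (fun j _ => mul_self_nonneg _)
    ⟨i, Finset.mem_univ i, mul_self_pos.2 hi⟩
lemma abs_dotp_le (u v : Fin n → ℝ) : |dotp u v| ≤ nrm u * nrm v := by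
  have h := Finset.sum_mul_sq_le_sq_mul_sq Finset.univ u v
  have h2 : (dotp u v) ^ 2 ≤ dotp u u * dotp v v := by simpa [dotp, pow_two] using h
  calc |dotp u v| = Real.sqrt ((dotp u v) ^ 2) := (Real.sqrt_sq_eq_abs _).symm
    _ ≤ Real.sqrt (dotp u u * dotp v v) := Real.sqrt_le_sqrt h2
    _ = nrm u * nrm v := Real.sqrt_mul (dotp_self_nonneg u) _
lemma dotp_le_nrm_mul (u v : Fin n → ℝ) : dotp u v ≤ nrm u * nrm v :=
  (le_abs_self _).trans (abs_dotp_le u v)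
lemma nrm_smul (r : ℝ) (u : Fin n → ℝ) : nrm (r • u) = |r| * nrm u := by
  rw [nrm, dotp_smul_left, dotp_smul_right, ← mul_assoc, nrm,
    Real.sqrt_mul (mul_self_nonneg r), Real.sqrt_mul_self_eq_abs]
lemma nrm_sub_le (x y : Fin n → ℝ) : nrm (x - y) ≤ nrm x + nrm y := by
  have hxy : -(nrm x * nrm y) ≤ dotp x y := by
    have := abs_dotp_le x y; linarith [neg_abs_le (dotp x y)]
  have hd : dotp (x - y) (x - y) ≤ (nrm x + nrm y) ^ 2 := by
    rw [dotp_sub_left, dotp_sub_right, dotp_sub_right, dotp_comm y x]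
    have hx := nrm_sq x; have hy := nrm_sq y
    nlinarith [nrm_nonneg x, nrm_nonneg y]
  calc nrm (x - y) ≤ Real.sqrt ((nrm x + nrm y) ^ 2) := Real.sqrt_le_sqrt hd
    _ = nrm x + nrm y := Real.sqrt_sq (by linarith [nrm_nonneg x, nrm_nonneg y])
lemma sqrt_one_add_le (x : ℝ) (hx : 0 ≤ x) : Real.sqrt (1 + x) ≤ 1 + x / 2 := by
  have h : 1 + x ≤ (1 + x / 2) ^ 2 := by nlinarith
  have := Real.sqrt_le_sqrt h
  rwa [Real.sqrt_sq (by linarith)] at this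
lemma mul_cos_le_sin {x : ℝ} (h0 : 0 ≤ x) (h1 : x ≤ π / 2) : x * Real.cos x ≤ Real.sin x := by
  rcases eq_or_lt_of_le h0 with h | h
  · simp [← h]
  · rcases eq_or_lt_of_le h1 with h2 | h2
    · rw [h2]; norm_num [Real.cos_pi_div_two, Real.sin_pi_div_two]
    · have hc : 0 < Real.cos x := Real.cos_pos_of_mem_Ioo ⟨by linarith [Real.pi_pos], h2⟩
      have ht := Real.lt_tan h h2
      rw [Real.tan_eq_sin_div_cos] at ht
      calc x * Real.cos x ≤ (Real.sin x / Real.cos x) * Real.cos x :=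
            mul_le_mul_of_nonneg_right ht.le hc.le
        _ = Real.sin x := by field_simp

lemma normstep {p : ℕ} (v vstar vt : Fin p → ℝ) (d : ℝ)
    (hv : dotp v v = 1) (hvs : dotp vstar vstar = 1) (hu0 : 0 ≤ dotp v vstar)
    (hd0 : 0 ≤ d) (hd1 : d ≤ 1/4)
    (hvt : vt = v + d • (vstar - dotp v vstar • v)) :
    dotp ((nrm vt)⁻¹ • vt) ((nrm vt)⁻¹ • vt) = 1 ∧
    0 ≤ dotp ((nrm vt)⁻¹ • vt) vstar ∧
    1 - dotp ((nrm vt)⁻¹ • vt) vstar ≤ (1 - d / 2) * (1 - dotp v vstar) := by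
  set u := dotp v vstar with hu
  have hu1 : u ≤ 1 := by
    have h := dotp_le_nrm_mul v vstar
    rw [nrm, nrm, hv, hvs, Real.sqrt_one, mul_one] at h
    exact h
  set z := vstar - u • v with hz
  have hzv : dotp z vstar = 1 - u * u := by
    rw [hz, dotp_sub_left, dotp_smul_left, hvs, ← hu]
  have hvz : dotp v z = 0 := by
    rw [hz, dotp_sub_right, dotp_smul_right, hv, ← hu]; ring
  have hzz : dotp z z = 1 - u * u := by
    nth_rewrite 1 [hz]
    rw [dotp_sub_left, dotp_smul_left, hvz, dotp_comm vstar z, hzv]; ring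
  have e1 : dotp vt vstar = u + d * (1 - u * u) := by
    rw [hvt, dotp_add_left, dotp_smul_left, hzv, ← hu]
  have e2 : dotp vt vt = 1 + d^2 * (1 - u * u) := by
    rw [hvt, dotp_add_left, dotp_add_right, dotp_add_right, dotp_smul_left,
      dotp_smul_left, dotp_smul_right, dotp_smul_right, hv, hvz,
      dotp_comm z v, hvz, hzz]
    ring
  have hX0 : 0 ≤ 1 - u * u := by nlinarith
  have hnum0 : 0 ≤ u + d * (1 - u * u) := by nlinarith
  have hNlb : 1 ≤ nrm vt := by
    have h1 : (1:ℝ) ≤ dotp vt vt := by rw [e2]; nlinarith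
    calc (1:ℝ) = Real.sqrt 1 := Real.sqrt_one.symm
      _ ≤ Real.sqrt (dotp vt vt) := Real.sqrt_le_sqrt h1
  have hNpos : (0:ℝ) < nrm vt := lt_of_lt_of_le one_pos hNlb
  have hNub : nrm vt ≤ 1 + d^2 * (1 - u * u) / 2 := by
    rw [nrm, e2]
    have h := sqrt_one_add_le (d^2 * (1 - u * u)) (by positivity)
    linarith
  have hsq : nrm vt ^ 2 = dotp vt vt := nrm_sq vt
  refine ⟨?_, ?_, ?_⟩
  · rw [dotp_smul_left, dotp_smul_right, ← hsq]
    field_simp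
  · rw [dotp_smul_left, e1]
    exact mul_nonneg (inv_nonneg.2 hNpos.le) hnum0
  · rw [dotp_smul_left, e1]
    have key : (1 - (1 - d/2) * (1 - u)) ≤ (nrm vt)⁻¹ * (u + d * (1 - u * u)) := by
      rcases le_or_gt (1 - (1 - d/2) * (1 - u)) 0 with hT | hT
      · exact le_trans hT (mul_nonneg (inv_nonneg.2 hNpos.le) hnum0)
      · have h1 : (1 - (1 - d/2) * (1 - u)) * nrm vt ≤
            (1 - (1 - d/2) * (1 - u)) * (1 + d^2 * (1 - u * u) / 2) :=
          mul_le_mul_of_nonneg_left hNub hT.le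
        have h2 : (1 - (1 - d/2) * (1 - u)) * (1 + d^2 * (1 - u * u) / 2) ≤
            u + d * (1 - u * u) := by
          nlinarith [sq_nonneg d, sq_nonneg (1-u), mul_nonneg hd0 (sub_nonneg.2 hu1),
            mul_nonneg hu0 hd0]
        calc (1 - (1 - d/2) * (1 - u))
            = ((1 - (1 - d/2) * (1 - u)) * nrm vt) * (nrm vt)⁻¹ := by
              field_simp
          _ ≤ (u + d * (1 - u * u)) * (nrm vt)⁻¹ :=
              mul_le_mul_of_nonneg_right (le_trans h1 h2) (inv_nonneg.2 hNpos.le)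
          _ = (nrm vt)⁻¹ * (u + d * (1 - u * u)) := mul_comm _ _
    linarith

lemma astep_bound {k : ℕ} (astar y ynext : Fin k → ℝ) (c₁ c₂ r : ℝ)
    (h : ynext = (fun i => c₁ * y i - c₂ * (∑ j, y j)) - r • astar)
    (hc₁ : 0 ≤ c₁) (hc₂ : 0 ≤ c₂) (hck : c₂ * k ≤ 2 * c₁) :
    nrm ynext ≤ c₁ * nrm y + |r| * nrm astar := by
  have hzeq : (fun i => c₁ * y i - c₂ * (∑ j, y j)) =
      c₁ • y - (c₂ * (∑ j, y j)) • (fun _ : Fin k => (1:ℝ)) := by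
    funext i; simp [mul_comm]
  have hone : dotp y (fun _ : Fin k => (1:ℝ)) = ∑ j, y j := by simp [dotp]
  have honeone : dotp (fun _ : Fin k => (1:ℝ)) (fun _ : Fin k => (1:ℝ)) = (k:ℝ) := by
    simp [dotp]
  have hzz : dotp (c₁ • y - (c₂ * (∑ j, y j)) • (fun _ : Fin k => (1:ℝ)))
      (c₁ • y - (c₂ * (∑ j, y j)) • (fun _ : Fin k => (1:ℝ))) ≤ c₁^2 * dotp y y := by
    simp only [dotp_sub_left, dotp_sub_right, dotp_smul_left, dotp_smul_right]
    rw [hone, honeone, dotp_comm (fun _ : Fin k => (1:ℝ)) y, hone]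
    nlinarith [sq_nonneg (∑ j, y j), mul_nonneg hc₂ (sq_nonneg (∑ j, y j))]
  have hz_nrm : nrm (c₁ • y - (c₂ * (∑ j, y j)) • (fun _ : Fin k => (1:ℝ))) ≤ c₁ * nrm y := by
    have h1 : nrm (c₁ • y - (c₂ * (∑ j, y j)) • (fun _ : Fin k => (1:ℝ))) ≤
        Real.sqrt (c₁^2 * dotp y y) := Real.sqrt_le_sqrt hzz
    rw [Real.sqrt_mul (sq_nonneg c₁), Real.sqrt_sq hc₁] at h1
    exact h1
  calc nrm ynext
      = nrm ((c₁ • y - (c₂ * (∑ j, y j)) • (fun _ : Fin k => (1:ℝ))) - r • astar) := by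
        rw [h, hzeq]
    _ ≤ nrm (c₁ • y - (c₂ * (∑ j, y j)) • (fun _ : Fin k => (1:ℝ))) + nrm (r • astar) :=
        nrm_sub_le _ _
    _ ≤ c₁ * nrm y + |r| * nrm astar := by rw [nrm_smul]; linarith
lemma geom_le {x L : ℝ} {t : ℕ} (hx0 : 0 ≤ x) (hx1 : x ≤ 1) (hL : L ≤ x * t) :
    (1 - x)^t ≤ Real.exp (-L) := by
  calc (1-x)^t ≤ (Real.exp (-x))^t :=
        pow_le_pow_left₀ (by linarith) (by linarith [Real.add_one_le_exp (-x)]) t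
    _ = Real.exp (-(x*t)) := by rw [← Real.exp_nat_mul]; congr 1; ring
    _ ≤ Real.exp (-L) := Real.exp_le_exp.2 (by linarith)

lemma l0sq {X c : ℝ} (hX : 4 ≤ X) (hc : 0 ≤ c) :
    (Real.sqrt X + c)^2 ≤ X * (2 + c^2/2) := by
  have h0 : 0 < X := by linarith
  have hs : Real.sqrt X ^ 2 = X := Real.sq_sqrt h0.le
  have h1 : 0 ≤ (Real.sqrt X - c)^2 := sq_nonneg _
  have h2 : 0 ≤ (X - 4) * c^2 := mul_nonneg (by linarith) (sq_nonneg _)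
  nlinarith [Real.sqrt_nonneg X]

lemma gker_le_pi {x : ℝ} (h0 : 0 ≤ x) (h2 : x ≤ π/2) : gker x ≤ π := by
  unfold gker
  have hs1 := Real.sin_le h0
  have hc1 := Real.cos_le_one x
  have hπ := Real.pi_pos
  nlinarith [mul_nonneg (by linarith : (0:ℝ) ≤ π - x) (by linarith : (0:ℝ) ≤ 1 - Real.cos x)]

lemma gker_ge {x : ℝ} (h0 : 0 ≤ x) (h2 : x ≤ π/2) :
    π - π * (1 - Real.cos x) ≤ gker x := by
  unfold gker
  have h := mul_cos_le_sin h0 h2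
  linarith
end SAux

/- Theorem, Stage II: convergence to the global optimum. Under the shortcut prior,
with `m = (1/5)‖a*‖₂²`, `M = 3‖a*‖₂² + 2(𝟙ᵀa*)²`, equal step sizes
`η = min{m/(2M²), 5π²/(4(k+π−1)²)}`, `φ_0 ≤ 5π/12`, and `m ≤ a_tᵀa* ≤ M` for all `t`,
there are constants `C, c > 0` depending only on `‖a*‖₂` and `|𝟙ᵀa*|` (the paper
gives `C = 5`) such that for every `δ > 0` and all `t ≥ (c/η)log(C′/δ)` with
`C′ = max{4, ‖a_0 − a*‖₂²}`, one has `‖w_t − w*‖₂² ≤ δ` and `‖a_t − a*‖₂² ≤ Cδ`. -/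
set_option maxHeartbeats 4000000 in
open SAux in
/-- Theorem, Stage II: convergence to the global optimum. Under the shortcut prior,
with `m = (1/5)‖a*‖₂²`, `M = 3‖a*‖₂² + 2(𝟙ᵀa*)²`, equal step sizes
`η = min{m/(2M²), 5π²/(4(k+π−1)²)}`, `φ_0 ≤ 5π/12`, and `m ≤ a_tᵀa* ≤ M` for all `t`,
there are constants `C, c > 0` depending only on `‖a*‖₂` and `|𝟙ᵀa*|` (the paper
gives `C = 5`) such that for every `δ > 0` and all `t ≥ (c/η)log(C′/δ)` with
`C′ = max{4, ‖a_0 − a*‖₂²}`, one has `‖w_t − w*‖₂² ≤ δ` and `‖a_t − a*‖₂² ≤ Cδ`. -/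
theorem stmt16 :
    ∀ R S : ℝ, ∃ C > (0 : ℝ), ∃ c > (0 : ℝ),
      ∀ (p k : ℕ), 0 < p → 0 < k →
      ∀ (vstar wstar : Fin p → ℝ) (astar : Fin k → ℝ),
        nrm vstar = 1 → vstar = sc p + wstar → nrm wstar ≤ 1 → astar ≠ 0 →
        nrm astar = R → |∑ j, astar j| = S →
      ∀ m M η : ℝ,
        m = (1 / 5) * dotp astar astar →
        M = 3 * dotp astar astar + 2 * (∑ j, astar j) ^ 2 →
        η = min (m / (2 * M ^ 2)) (5 * π ^ 2 / (4 * (k + π - 1) ^ 2)) →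
      ∀ (w : ℕ → Fin p → ℝ) (a : ℕ → Fin k → ℝ),
        nrm (sc p + w 0) = 1 →
        phiAngle vstar (w 0) ≤ 5 * π / 12 →
        (∀ t, w (t + 1) = wStep vstar astar η (w t) (a t)) →
        (∀ t, a (t + 1) = aStep vstar astar η (w t) (a t)) →
        (∀ t, m ≤ dotp (a t) astar ∧ dotp (a t) astar ≤ M) →
      ∀ δ : ℝ, 0 < δ →
      ∀ t : ℕ,
        (c / η) * Real.log (max 4 (dotp (a 0 - astar) (a 0 - astar)) / δ) ≤ (t : ℝ) →
        dotp (w t - wstar) (w t - wstar) ≤ δ ∧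
        dotp (a t - astar) (a t - astar) ≤ C * δ := by
  intro R S
  refine ⟨if 0 < R then 2 + (40/R)^2 else 1, ?_,
    if 0 < R then max (40/R^2) (min ((π-1)/(2*π)) (R^2/80))⁻¹ else 1, ?_, ?_⟩
  · split_ifs with h
    · positivity
    · norm_num
  · split_ifs with h
    · refine lt_of_lt_of_le (show (0:ℝ) < 40/R^2 by positivity) (le_max_left _ _)
    · norm_num
  intro p k hp hk vstar wstar astar hvs1 hshort hws hA0 hRdef hSdef m M η hmdef hMdef hηdef
    w a hw0 hphi0 hiw hia habnd δ hδ t ht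
  have hπ3 : (3:ℝ) < π := Real.pi_gt_three
  have hAA : 0 < dotp astar astar := dotp_self_pos hA0
  have hRpos : 0 < R := by rw [← hRdef]; exact Real.sqrt_pos.2 hAA
  simp only [if_pos hRpos] at ht ⊢
  have hR2 : dotp astar astar = R^2 := by
    rw [← hRdef, nrm]; exact (Real.sq_sqrt (dotp_self_nonneg astar)).symm
  have hS2 : (∑ j, astar j)^2 = S^2 := by rw [← hSdef, sq_abs]
  have hmval : m = R^2/5 := by rw [hmdef, hR2]; ring
  have hmpos : 0 < m := by rw [hmval]; positivity
  have hMval : M = 3*R^2 + 2*S^2 := by rw [hMdef, hR2, hS2]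
  have hMpos : 0 < M := by nlinarith [sq_nonneg S]
  have hmleM : m ≤ M := by nlinarith [sq_nonneg S]
  have hk1 : (1:ℝ) ≤ (k:ℝ) := by exact_mod_cast hk
  have hKpos : 0 < (k:ℝ) + π - 1 := by linarith
  have hKπ : π ≤ (k:ℝ) + π - 1 := by linarith
  have hηpos : 0 < η := by
    rw [hηdef]
    exact lt_min (by positivity) (by positivity)
  have hη1 : η ≤ m/(2*M^2) := by rw [hηdef]; exact min_le_left _ _
  have hη2 : η ≤ 5*π^2/(4*((k:ℝ)+π-1)^2) := by rw [hηdef]; exact min_le_right _ _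
  -- basic step-size bounds
  have hη54 : η ≤ 5/4 := by
    have h : 5*π^2/(4*((k:ℝ)+π-1)^2) ≤ 5/4 := by
      rw [div_le_div_iff₀ (by positivity) (by norm_num)]
      nlinarith
    linarith
  have hηα : η * ((π-1)/(2*π)) ≤ 5/8 := by
    have h0 : (0:ℝ) ≤ (π-1)/(2*π) := by
      apply div_nonneg <;> linarith
    have h1 : η * ((π-1)/(2*π)) ≤ (5/4) * ((π-1)/(2*π)) :=
      mul_le_mul_of_nonneg_right hη54 h0
    have h2 : (5/4) * ((π-1)/(2*π)) ≤ 5/8 := by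
      rw [show (5/4 : ℝ) * ((π-1)/(2*π)) = 5*(π-1)/(8*π) by ring,
        div_le_div_iff₀ (by positivity) (by norm_num)]
      linarith
    linarith
  have hηk : η * (k:ℝ) ≤ 5*π/4 := by
    have hkK : (k:ℝ) ≤ (k:ℝ) + π - 1 := by linarith
    have h1 : η * (k:ℝ) ≤ (5*π^2/(4*((k:ℝ)+π-1)^2)) * (k:ℝ) :=
      mul_le_mul_of_nonneg_right hη2 (by linarith)
    have h2 : (5*π^2/(4*((k:ℝ)+π-1)^2)) * (k:ℝ) ≤ 5*π/4 := by
      rw [div_mul_eq_mul_div, div_le_div_iff₀ (by positivity) (by norm_num)]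
      nlinarith [mul_le_mul hKπ hkK (by linarith : (0:ℝ) ≤ (k:ℝ)) (by linarith : (0:ℝ) ≤ (k:ℝ)+π-1)]
    linarith
  have hck : (η/(2*π)) * (k:ℝ) ≤ 2 * (1 - η*((π-1)/(2*π))) := by
    have e1 : (η/(2*π)) * (k:ℝ) = (η*(k:ℝ))/(2*π) := by ring
    have e2 : (η*(k:ℝ))/(2*π) ≤ (5*π/4)/(2*π) := by gcongr
    have e3 : (5*π/4)/(2*π) = 5/8 := by
      rw [div_eq_div_iff (by positivity) (by norm_num)]
      ring
    linarith
  -- geometric facts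
  have hvs : dotp vstar vstar = 1 := by
    rw [← nrm_sq, hvs1]; norm_num
  have hv0 : dotp (sc p + w 0) (sc p + w 0) = 1 := by
    rw [← nrm_sq, hw0]; norm_num
  have hu00 : 0 ≤ dotp (sc p + w 0) vstar := by
    have hphi0' : Real.arccos (dotp (sc p + w 0) vstar) ≤ 5*π/12 := hphi0
    exact Real.arccos_le_pi_div_two.1 (le_trans hphi0' (by linarith))
  -- one-step fact for the w-dynamics
  have wfact : ∀ s : ℕ, dotp (sc p + w s) (sc p + w s) = 1 → 0 ≤ dotp (sc p + w s) vstar →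
      dotp (sc p + w (s+1)) (sc p + w (s+1)) = 1 ∧ 0 ≤ dotp (sc p + w (s+1)) vstar ∧
      1 - dotp (sc p + w (s+1)) vstar ≤ (1 - η*m/8) * (1 - dotp (sc p + w s) vstar) := by
    intro s hvv hu0
    have hu1s : dotp (sc p + w s) vstar ≤ 1 := by
      have h := dotp_le_nrm_mul (sc p + w s) vstar
      rw [nrm, nrm, hvv, hvs, Real.sqrt_one, mul_one] at h
      exact h
    have hφ2 : phiAngle vstar (w s) ≤ π/2 := Real.arccos_le_pi_div_two.2 hu0
    have hφ0 : 0 ≤ phiAngle vstar (w s) := Real.arccos_nonneg _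
    have hAlb := (habnd s).1
    have hAub := (habnd s).2
    have hlam_lb : m/4 ≤ dotp (a s) astar * (π - phiAngle vstar (w s)) / (2*π) := by
      have h1 : m * (π/2) ≤ dotp (a s) astar * (π - phiAngle vstar (w s)) :=
        mul_le_mul hAlb (by linarith) (by linarith) (by linarith)
      rw [le_div_iff₀ (by positivity)]
      linarith
    have hlam_ub : dotp (a s) astar * (π - phiAngle vstar (w s)) / (2*π) ≤ M/2 := by
      have h1 : dotp (a s) astar * (π - phiAngle vstar (w s)) ≤ M * π :=
        mul_le_mul hAub (by linarith) (by linarith) (by linarith)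
      rw [div_le_iff₀ (by positivity)]
      linarith
    have hd0 : 0 ≤ η * (dotp (a s) astar * (π - phiAngle vstar (w s)) / (2*π)) :=
      mul_nonneg hηpos.le (le_trans (by linarith) hlam_lb)
    have hd1 : η * (dotp (a s) astar * (π - phiAngle vstar (w s)) / (2*π)) ≤ 1/4 := by
      have h1 : η * (dotp (a s) astar * (π - phiAngle vstar (w s)) / (2*π)) ≤ η * (M/2) :=
        mul_le_mul_of_nonneg_left hlam_ub hηpos.le
      have h2 : η * (M/2) ≤ (m/(2*M^2)) * (M/2) :=
        mul_le_mul_of_nonneg_right hη1 (by linarith)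
      have h3 : (m/(2*M^2)) * (M/2) = m/(4*M) := by
        rw [div_mul_div_comm, div_eq_div_iff (by positivity) (by positivity)]
        ring
      have h4 : m/(4*M) ≤ 1/4 := by
        rw [div_le_div_iff₀ (by linarith) (by norm_num)]
        linarith
      linarith
    have hXeq : sc p + (w s - η • Gw vstar astar (w s) (a s)) =
        (sc p + w s) + (η * (dotp (a s) astar * (π - phiAngle vstar (w s)) / (2*π))) •
          (vstar - dotp (sc p + w s) vstar • (sc p + w s)) := by
      funext i
      simp only [Gw, Pi.add_apply, Pi.sub_apply, Pi.smul_apply, smul_eq_mul]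
      ring
    have hw1 : sc p + w (s+1) =
        (nrm (sc p + (w s - η • Gw vstar astar (w s) (a s))))⁻¹ •
          (sc p + (w s - η • Gw vstar astar (w s) (a s))) := by
      rw [hiw s]
      unfold wStep
      funext i
      simp only [Pi.add_apply, Pi.sub_apply]
      ring
    rw [hXeq] at hw1
    obtain ⟨c1, c2, c3⟩ := normstep (sc p + w s) vstar _
      (η * (dotp (a s) astar * (π - phiAngle vstar (w s)) / (2*π)))
      hvv hvs hu0 hd0 hd1 rfl
    rw [← hw1] at c1 c2 c3
    refine ⟨c1, c2, le_trans c3 ?_⟩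
    apply mul_le_mul_of_nonneg_right ?_ (by linarith : (0:ℝ) ≤ 1 - dotp (sc p + w s) vstar)
    have h5 : η * (m/4) ≤ η * (dotp (a s) astar * (π - phiAngle vstar (w s)) / (2*π)) :=
      mul_le_mul_of_nonneg_left hlam_lb hηpos.le
    linarith
  -- invariants along the trajectory
  have inv : ∀ s : ℕ, dotp (sc p + w s) (sc p + w s) = 1 ∧ 0 ≤ dotp (sc p + w s) vstar := by
    intro s
    induction s with
    | zero => exact ⟨hv0, hu00⟩
    | succ n ih => exact ⟨(wfact n ih.1 ih.2).1, (wfact n ih.1 ih.2).2.1⟩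
  have hule1 : ∀ s : ℕ, dotp (sc p + w s) vstar ≤ 1 := by
    intro s
    have h := dotp_le_nrm_mul (sc p + w s) vstar
    rw [nrm, nrm, (inv s).1, hvs, Real.sqrt_one, mul_one] at h
    exact h
  have hq1 : η*m/8 ≤ 1/16 := by
    have h1 : η*m ≤ (m/(2*M^2))*m := mul_le_mul_of_nonneg_right hη1 hmpos.le
    have h2 : (m/(2*M^2))*m = m^2/(2*M^2) := by ring
    have h3 : m^2/(2*M^2) ≤ 1/2 := by
      rw [div_le_div_iff₀ (by positivity) (by norm_num)]
      nlinarith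
    linarith
  have sbound : ∀ s : ℕ, 1 - dotp (sc p + w s) vstar ≤ (1 - η*m/8)^s := by
    intro s
    induction s with
    | zero => rw [pow_zero]; linarith
    | succ n ih =>
      calc 1 - dotp (sc p + w (n+1)) vstar
          ≤ (1 - η*m/8) * (1 - dotp (sc p + w n) vstar) := (wfact n (inv n).1 (inv n).2).2.2
        _ ≤ (1 - η*m/8) * (1 - η*m/8)^n := by
            apply mul_le_mul_of_nonneg_left ih
            linarith
        _ = (1 - η*m/8)^(n+1) := by rw [pow_succ]; ring
  -- one-step bound for the a-dynamics
  have afact : ∀ s : ℕ, nrm (a (s+1) - astar) ≤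
      (1 - η*((π-1)/(2*π))) * nrm (a s - astar)
        + (η*(R/2)) * (1 - dotp (sc p + w s) vstar) := by
    intro s
    have hu0 := (inv s).2
    have hu1s := hule1 s
    have hφ0 : 0 ≤ phiAngle vstar (w s) := Real.arccos_nonneg _
    have hφ2 : phiAngle vstar (w s) ≤ π/2 := Real.arccos_le_pi_div_two.2 hu0
    have hcos : Real.cos (phiAngle vstar (w s)) = dotp (sc p + w s) vstar :=
      Real.cos_arccos (by linarith) hu1s
    have hgub : gker (phiAngle vstar (w s)) ≤ π := gker_le_pi hφ0 hφ2
    have hglb : π - π*(1 - dotp (sc p + w s) vstar) ≤ gker (phiAngle vstar (w s)) := by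
      have h := gker_ge hφ0 hφ2
      rw [hcos] at h
      exact h
    have hid : a (s+1) - astar =
        (fun i => (1 - η*((π-1)/(2*π))) * (a s - astar) i
          - (η/(2*π)) * (∑ j, (a s - astar) j))
        - (η*(1/(2*π))*(π - gker (phiAngle vstar (w s)))) • astar := by
      rw [hia s]
      funext i
      simp only [aStep, Ga, Pi.sub_apply, Pi.smul_apply, smul_eq_mul,
        Finset.sum_sub_distrib]
      have hπne : (π:ℝ) ≠ 0 := by linarith
      field_simp
      ring
    have hb := astep_bound astar (a s - astar) _ (1 - η*((π-1)/(2*π))) (η/(2*π))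
      (η*(1/(2*π))*(π - gker (phiAngle vstar (w s)))) hid
      (by linarith [hηα]) (by positivity) (by linarith [hck])
    refine le_trans hb ?_
    have habs : |η*(1/(2*π))*(π - gker (phiAngle vstar (w s)))| ≤
        (η/(2*π)) * (π * (1 - dotp (sc p + w s) vstar)) := by
      rw [abs_mul, abs_of_nonneg (by positivity : (0:ℝ) ≤ η*(1/(2*π)))]
      have h1 : |π - gker (phiAngle vstar (w s))| ≤ π * (1 - dotp (sc p + w s) vstar) := by
        have hnn : 0 ≤ π * (1 - dotp (sc p + w s) vstar) :=
          mul_nonneg (by linarith) (by linarith [hule1 s])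
        rw [abs_le]
        constructor <;> linarith
      calc η*(1/(2*π)) * |π - gker (phiAngle vstar (w s))|
          ≤ η*(1/(2*π)) * (π * (1 - dotp (sc p + w s) vstar)) :=
            mul_le_mul_of_nonneg_left h1 (by positivity)
        _ = (η/(2*π)) * (π * (1 - dotp (sc p + w s) vstar)) := by ring
    have hre : (η/(2*π)) * (π * (1 - dotp (sc p + w s) vstar)) * R
        = (η*(R/2)) * (1 - dotp (sc p + w s) vstar) * (π/π) := by ring
    have hmulR : |η*(1/(2*π))*(π - gker (phiAngle vstar (w s)))| * nrm astar ≤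
        (η*(R/2)) * (1 - dotp (sc p + w s) vstar) := by
      rw [hRdef]
      calc |η*(1/(2*π))*(π - gker (phiAngle vstar (w s)))| * R
          ≤ (η/(2*π)) * (π * (1 - dotp (sc p + w s) vstar)) * R :=
            mul_le_mul_of_nonneg_right habs hRpos.le
        _ = (η*(R/2)) * (1 - dotp (sc p + w s) vstar) * (π/π) := hre
        _ = (η*(R/2)) * (1 - dotp (sc p + w s) vstar) := by
            rw [div_self (by linarith : (π:ℝ) ≠ 0), mul_one]
    linarith
  -- Lyapunov recursion
  have hμa : min ((π-1)/(2*π)) (R^2/80) ≤ (π-1)/(2*π) := min_le_left _ _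
  have hμb : min ((π-1)/(2*π)) (R^2/80) ≤ R^2/80 := min_le_right _ _
  have hμpos : 0 < min ((π-1)/(2*π)) (R^2/80) := by
    apply lt_min
    · apply div_pos <;> linarith
    · positivity
  have hημ58 : η * min ((π-1)/(2*π)) (R^2/80) ≤ 5/8 := by
    have := mul_le_mul_of_nonneg_left hμa hηpos.le
    linarith
  have hημ0 : 0 ≤ η * min ((π-1)/(2*π)) (R^2/80) := by positivity
  have Lrec : ∀ s : ℕ,
      nrm (a (s+1) - astar) + (40/R) * (1 - dotp (sc p + w (s+1)) vstar) ≤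
      (1 - η * min ((π-1)/(2*π)) (R^2/80)) *
        (nrm (a s - astar) + (40/R) * (1 - dotp (sc p + w s) vstar)) := by
    intro s
    have h1 := afact s
    have h2 := (wfact s (inv s).1 (inv s).2).2.2
    have hs0 : 0 ≤ 1 - dotp (sc p + w s) vstar := by linarith [hule1 s]
    have A1 : (1 - η*((π-1)/(2*π))) * nrm (a s - astar) ≤
        (1 - η * min ((π-1)/(2*π)) (R^2/80)) * nrm (a s - astar) := by
      apply mul_le_mul_of_nonneg_right ?_ (nrm_nonneg _)
      have := mul_le_mul_of_nonneg_left hμa hηpos.le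
      linarith
    have hcoef : η*(R/2) + (40/R)*(1 - η*m/8) ≤
        (1 - η * min ((π-1)/(2*π)) (R^2/80)) * (40/R) := by
      have hμR : η * min ((π-1)/(2*π)) (R^2/80) * (40/R) ≤ η*(R^2/80)*(40/R) :=
        mul_le_mul_of_nonneg_right (mul_le_mul_of_nonneg_left hμb hηpos.le) (by positivity)
      have e40 : η*(R^2/80)*(40/R) = η*R/2 := by
        field_simp
        ring
      have e41 : (40/R)*(1 - η*m/8) = 40/R - η*R := by
        rw [hmval]
        field_simp
        ring
      have e43 : (1 - η * min ((π-1)/(2*π)) (R^2/80)) * (40/R)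
          = 40/R - η * min ((π-1)/(2*π)) (R^2/80) * (40/R) := by ring
      linarith [e40, e41, hμR, e43]
    have A2 : η*(R/2) * (1 - dotp (sc p + w s) vstar)
        + (40/R) * ((1 - η*m/8) * (1 - dotp (sc p + w s) vstar)) ≤
        (1 - η * min ((π-1)/(2*π)) (R^2/80)) * ((40/R) * (1 - dotp (sc p + w s) vstar)) := by
      calc η*(R/2) * (1 - dotp (sc p + w s) vstar)
            + (40/R) * ((1 - η*m/8) * (1 - dotp (sc p + w s) vstar))
          = (η*(R/2) + (40/R)*(1 - η*m/8)) * (1 - dotp (sc p + w s) vstar) := by ring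
        _ ≤ ((1 - η * min ((π-1)/(2*π)) (R^2/80)) * (40/R)) * (1 - dotp (sc p + w s) vstar) :=
            mul_le_mul_of_nonneg_right hcoef hs0
        _ = (1 - η * min ((π-1)/(2*π)) (R^2/80)) * ((40/R) * (1 - dotp (sc p + w s) vstar)) := by
            ring
    have A3 : (40/R) * (1 - dotp (sc p + w (s+1)) vstar) ≤
        (40/R) * ((1 - η*m/8) * (1 - dotp (sc p + w s) vstar)) :=
      mul_le_mul_of_nonneg_left h2 (by positivity)
    linarith
  have Lbound : ∀ s : ℕ,
      nrm (a s - astar) + (40/R) * (1 - dotp (sc p + w s) vstar) ≤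
      (1 - η * min ((π-1)/(2*π)) (R^2/80))^s *
        (nrm (a 0 - astar) + (40/R) * (1 - dotp (sc p + w 0) vstar)) := by
    intro s
    induction s with
    | zero => rw [pow_zero, one_mul]
    | succ n ih =>
      calc nrm (a (n+1) - astar) + (40/R) * (1 - dotp (sc p + w (n+1)) vstar)
          ≤ (1 - η * min ((π-1)/(2*π)) (R^2/80)) *
            (nrm (a n - astar) + (40/R) * (1 - dotp (sc p + w n) vstar)) := Lrec n
        _ ≤ (1 - η * min ((π-1)/(2*π)) (R^2/80)) *
            ((1 - η * min ((π-1)/(2*π)) (R^2/80))^n *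
              (nrm (a 0 - astar) + (40/R) * (1 - dotp (sc p + w 0) vstar))) :=
            mul_le_mul_of_nonneg_left ih (by linarith)
        _ = (1 - η * min ((π-1)/(2*π)) (R^2/80))^(n+1) *
            (nrm (a 0 - astar) + (40/R) * (1 - dotp (sc p + w 0) vstar)) := by
            rw [pow_succ]
            ring
  -- final numerics
  have hwt : dotp (w t - wstar) (w t - wstar) = 2*(1 - dotp (sc p + w t) vstar) := by
    have hsub : w t - wstar = (sc p + w t) - vstar := by
      funext i
      rw [hshort]
      simp only [Pi.sub_apply, Pi.add_apply]
      ring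
    rw [hsub, dotp_sub_left, dotp_sub_right, dotp_sub_right, (inv t).1, hvs,
      dotp_comm vstar (sc p + w t)]
    ring
  have hat : dotp (a t - astar) (a t - astar) = nrm (a t - astar)^2 := (nrm_sq _).symm
  set ce := max (40/R^2) (min ((π-1)/(2*π)) (R^2/80))⁻¹ with hce
  set Cp := max 4 (dotp (a 0 - astar) (a 0 - astar)) with hCp
  have hC4 : (4:ℝ) ≤ Cp := le_max_left _ _
  have hCpos : (0:ℝ) < Cp := by linarith
  have he0 : nrm (a 0 - astar) ≤ Real.sqrt Cp := by
    rw [nrm]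
    exact Real.sqrt_le_sqrt (le_max_right _ _)
  have hs00 : 0 ≤ 1 - dotp (sc p + w 0) vstar := by linarith [hule1 0]
  have hs01 : 1 - dotp (sc p + w 0) vstar ≤ 1 := by linarith [hu00]
  have hL0 : nrm (a 0 - astar) + (40/R)*(1 - dotp (sc p + w 0) vstar)
      ≤ Real.sqrt Cp + 40/R := by
    have := mul_le_of_le_one_right (by positivity : (0:ℝ) ≤ 40/R) hs01
    linarith
  have hL0nn : 0 ≤ Real.sqrt Cp + 40/R := by positivity
  have hsqCp : Real.sqrt Cp ^ 2 = Cp := Real.sq_sqrt hCpos.le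
  have hL0sq : (Real.sqrt Cp + 40/R)^2 ≤ Cp * (2 + (40/R)^2/2) :=
    l0sq hC4 (by positivity)
  have h38 : 0 ≤ 1 - η * min ((π-1)/(2*π)) (R^2/80) := by linarith [hημ58]
  have hq0' : 0 ≤ η*m/8 := by positivity
  have hq1' : η*m/8 ≤ 1 := by linarith [hq1]
  have hημ1 : η * min ((π-1)/(2*π)) (R^2/80) ≤ 1 := by linarith [hημ58]
  have hetles : ∀ s : ℕ, nrm (a s - astar) ≤
      (1 - η * min ((π-1)/(2*π)) (R^2/80))^s * (Real.sqrt Cp + 40/R) := by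
    intro s
    have hLs := Lbound s
    have hst : 0 ≤ (40/R)*(1 - dotp (sc p + w s) vstar) :=
      mul_nonneg (by positivity) (by linarith [hule1 s])
    have hmono : (1 - η * min ((π-1)/(2*π)) (R^2/80))^s *
        (nrm (a 0 - astar) + (40/R)*(1 - dotp (sc p + w 0) vstar)) ≤
        (1 - η * min ((π-1)/(2*π)) (R^2/80))^s * (Real.sqrt Cp + 40/R) :=
      mul_le_mul_of_nonneg_left hL0 (pow_nonneg h38 s)
    linarith
  by_cases hcase : δ ≤ Cp
  · -- small δ : use the exponential decay
    have hlogpos : 0 ≤ Real.log (Cp/δ) := Real.log_nonneg ((one_le_div hδ).2 hcase)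
    have hce0 : 0 < ce := lt_of_lt_of_le (by positivity) (le_max_left _ _)
    have hcq : (8:ℝ) ≤ m * ce := by
      have h1 : m * (40/R^2) = 8 := by
        rw [hmval]
        field_simp
        ring
      have h2 : m * (40/R^2) ≤ m * ce :=
        mul_le_mul_of_nonneg_left (le_max_left _ _) hmpos.le
      linarith
    have hcμ : (1:ℝ) ≤ min ((π-1)/(2*π)) (R^2/80) * ce := by
      have h2 : min ((π-1)/(2*π)) (R^2/80) * (min ((π-1)/(2*π)) (R^2/80))⁻¹ = 1 :=
        mul_inv_cancel₀ hμpos.ne'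
      have h3 : min ((π-1)/(2*π)) (R^2/80) * (min ((π-1)/(2*π)) (R^2/80))⁻¹ ≤
          min ((π-1)/(2*π)) (R^2/80) * ce :=
        mul_le_mul_of_nonneg_left (le_max_right _ _) hμpos.le
      linarith
    have hexp : Real.exp (-(Real.log (Cp/δ))) = δ/Cp := by
      rw [Real.exp_neg, Real.exp_log (by positivity), inv_div]
    have hqt : Real.log (Cp/δ) ≤ (η*m/8) * t := by
      have h0 : (η*m/8) * ((ce/η) * Real.log (Cp/δ))
          = (m*ce/8) * Real.log (Cp/δ) := by
        field_simp
      have h1 : Real.log (Cp/δ) ≤ (m*ce/8) * Real.log (Cp/δ) :=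
        le_mul_of_one_le_left hlogpos (by linarith)
      have h2 : (η*m/8) * ((ce/η) * Real.log (Cp/δ)) ≤ (η*m/8) * t :=
        mul_le_mul_of_nonneg_left ht hq0'
      linarith
    have hμt : Real.log (Cp/δ) ≤ (η * min ((π-1)/(2*π)) (R^2/80)) * t := by
      have h0 : (η * min ((π-1)/(2*π)) (R^2/80)) * ((ce/η) * Real.log (Cp/δ))
          = (min ((π-1)/(2*π)) (R^2/80) * ce) * Real.log (Cp/δ) := by
        field_simp
      have h1 : Real.log (Cp/δ) ≤ (min ((π-1)/(2*π)) (R^2/80) * ce) * Real.log (Cp/δ) :=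
        le_mul_of_one_le_left hlogpos hcμ
      have h2 : (η * min ((π-1)/(2*π)) (R^2/80)) * ((ce/η) * Real.log (Cp/δ)) ≤
          (η * min ((π-1)/(2*π)) (R^2/80)) * t :=
        mul_le_mul_of_nonneg_left ht hημ0
      linarith
    have hexpq : (1 - η*m/8)^t ≤ δ/Cp := by
      have := geom_le hq0' hq1' hqt
      rwa [hexp] at this
    have hexpμ : (1 - η * min ((π-1)/(2*π)) (R^2/80))^t ≤ δ/Cp := by
      have := geom_le hημ0 hημ1 hμt
      rwa [hexp] at this
    constructor
    · rw [hwt]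
      have h1 := sbound t
      have h2 : δ/Cp ≤ δ/4 := by
        apply div_le_div_of_nonneg_left hδ.le (by norm_num) hC4
      linarith
    · rw [hat]
      have h1 : nrm (a t - astar) ≤ (δ/Cp) * (Real.sqrt Cp + 40/R) := by
        have h2 := hetles t
        have h3 : (1 - η * min ((π-1)/(2*π)) (R^2/80))^t * (Real.sqrt Cp + 40/R) ≤
            (δ/Cp) * (Real.sqrt Cp + 40/R) :=
          mul_le_mul_of_nonneg_right hexpμ hL0nn
        linarith
      have h4 : nrm (a t - astar)^2 ≤ ((δ/Cp) * (Real.sqrt Cp + 40/R))^2 :=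
        pow_le_pow_left₀ (nrm_nonneg _) h1 2
      have h5 : ((δ/Cp) * (Real.sqrt Cp + 40/R))^2
          = (δ/Cp)^2 * (Real.sqrt Cp + 40/R)^2 := by ring
      have h6 : (δ/Cp)^2 * (Real.sqrt Cp + 40/R)^2 ≤ (δ/Cp)^2 * (Cp * (2 + (40/R)^2/2)) :=
        mul_le_mul_of_nonneg_left hL0sq (sq_nonneg _)
      have h7 : (δ/Cp)^2 * (Cp * (2 + (40/R)^2/2)) = (δ*(δ/Cp)) * (2 + (40/R)^2/2) := by
        field_simp
      have hd1' : δ/Cp ≤ 1 := (div_le_one hCpos).2 hcase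
      have h8 : δ*(δ/Cp) ≤ δ := mul_le_of_le_one_right hδ.le hd1'
      have h9 : (δ*(δ/Cp)) * (2 + (40/R)^2/2) ≤ δ * (2 + (40/R)^2/2) :=
        mul_le_mul_of_nonneg_right h8 (by positivity)
      have h10 : δ * (2 + (40/R)^2/2) ≤ (2 + (40/R)^2) * δ := by
        have hnn : 0 ≤ δ * (40/R)^2 := mul_nonneg hδ.le (sq_nonneg _)
        linarith
      linarith
  · -- large δ : uniform bounds suffice
    have hlt : Cp < δ := not_le.1 hcase
    constructor
    · rw [hwt]
      have := (inv t).2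
      linarith
    · rw [hat]
      have hpow1 : (1 - η * min ((π-1)/(2*π)) (R^2/80))^t ≤ 1 :=
        pow_le_one₀ h38 (by linarith)
      have h1 : nrm (a t - astar) ≤ Real.sqrt Cp + 40/R := by
        have h2 := hetles t
        have h3 : (1 - η * min ((π-1)/(2*π)) (R^2/80))^t * (Real.sqrt Cp + 40/R) ≤
            1 * (Real.sqrt Cp + 40/R) := mul_le_mul_of_nonneg_right hpow1 hL0nn
        linarith
      have h4 : nrm (a t - astar)^2 ≤ (Real.sqrt Cp + 40/R)^2 :=
        pow_le_pow_left₀ (nrm_nonneg _) h1 2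
      have h5 : Cp * (2 + (40/R)^2/2) ≤ δ * (2 + (40/R)^2) := by
        have ha : Cp * (2 + (40/R)^2/2) ≤ δ * (2 + (40/R)^2/2) :=
          mul_le_mul_of_nonneg_right hlt.le (by positivity)
        have hb : δ * (2 + (40/R)^2/2) ≤ δ * (2 + (40/R)^2) := by
          have hnn : 0 ≤ δ * (40/R)^2 := mul_nonneg hδ.le (sq_nonneg _)
          linarith
        linarith
      have h6 : δ * (2 + (40/R)^2) = (2 + (40/R)^2) * δ := mul_comm _ _
      linarith
end
end

section
/- (Bound on the norm of G_w.) Let (w,a) ∈ ℝ^p × ℝ^k with ‖w + 𝟙/√p‖₂ = 1, and write v = 𝟙/√p + w. Then ‖G_w(w,a)‖₂² ≤ ((aᵀa*)²/4)·‖v − v*‖₂². -/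
open Real
open scoped BigOperators

noncomputable section

/-- Bound on the norm of `G_w`: `‖G_w(w,a)‖₂² ≤ ((aᵀa*)²/4)‖v − v*‖₂²`
where `v = 𝟙/√p + w` is a unit vector. -/
theorem stmt18 (p k : ℕ) (hp : 0 < p) (hk : 0 < k)
    (vstar : Fin p → ℝ) (hv : nrm vstar = 1)
    (astar : Fin k → ℝ)
    (w : Fin p → ℝ) (a : Fin k → ℝ)
    (hw : nrm (w + sc p) = 1) :
    dotp (Gw vstar astar w a) (Gw vstar astar w a) ≤
      (dotp a astar ^ 2 / 4) * dotp (sc p + w - vstar) (sc p + w - vstar) := by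
  set v : Fin p → ℝ := sc p + w with hvdef
  set s : ℝ := dotp v vstar with hsdef
  set A : ℝ := dotp a astar with hAdef
  set φ : ℝ := phiAngle vstar w with hφdef
  set c : ℝ := A * (π - φ) / (2 * π) with hcdef
  have hvv : dotp v v = 1 := by
    have : nrm v = 1 := by rw [hvdef, add_comm]; exact hw
    rw [nrm] at this
    exact Real.sqrt_eq_one.mp this
  have hss : dotp vstar vstar = 1 := by
    rw [nrm] at hv; exact Real.sqrt_eq_one.mp hv
  have hcs : s ^ 2 ≤ 1 := by
    have h := Finset.sum_mul_sq_le_sq_mul_sq Finset.univ v vstar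
    have h1 : (∑ i, v i ^ 2) = dotp v v := by simp [dotp, sq]
    have h2 : (∑ i, vstar i ^ 2) = dotp vstar vstar := by simp [dotp, sq]
    rw [h1, h2, hvv, hss] at h
    simpa [hsdef, dotp] using h
  have hs1 : s ≤ 1 := by nlinarith
  have hG : dotp (Gw vstar astar w a) (Gw vstar astar w a)
      = c ^ 2 * dotp vstar vstar - 2 * c ^ 2 * s * dotp v vstar + c ^ 2 * s ^ 2 * dotp v v := by
    have hterm : ∀ i, Gw vstar astar w a i * Gw vstar astar w a i
        = c ^ 2 * (vstar i * vstar i) - (2 * c ^ 2 * s) * (v i * vstar i)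
          + (c ^ 2 * s ^ 2) * (v i * v i) := by
      intro i
      have hGi : Gw vstar astar w a i = -c * (vstar i - s * v i) := by
        simp only [Gw, hcdef, hsdef, hvdef]
        try ring
      rw [hGi]; ring
    simp only [dotp, hterm, Finset.sum_add_distrib, Finset.sum_sub_distrib,
      ← Finset.mul_sum]
  have hD : dotp (sc p + w - vstar) (sc p + w - vstar)
      = dotp v v - 2 * dotp v vstar + dotp vstar vstar := by
    have hterm : ∀ i, (sc p + w - vstar) i * (sc p + w - vstar) i
        = v i * v i - 2 * (v i * vstar i) + vstar i * vstar i := by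
      intro i
      simp only [Pi.sub_apply, hvdef]
      ring
    simp only [dotp, hterm, Finset.sum_add_distrib, Finset.sum_sub_distrib,
      ← Finset.mul_sum]
  rw [hG, hD, hvv, hss, ← hsdef]
  have hφ0 : 0 ≤ φ := Real.arccos_nonneg _
  have hφπ : φ ≤ π := Real.arccos_le_pi _
  have hπ : 0 < π := Real.pi_pos
  have hc : c ^ 2 ≤ A ^ 2 / 4 := by
    rw [hcdef, div_pow, div_le_div_iff₀ (by positivity) (by norm_num)]
    nlinarith [sq_nonneg A, sq_nonneg (A * φ), sq_nonneg (A * (π - φ))]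
  have hc0 : 0 ≤ c ^ 2 := sq_nonneg c
  have h1 : c ^ 2 * (1 - s ^ 2) ≤ A ^ 2 / 4 * (1 - s ^ 2) :=
    mul_le_mul_of_nonneg_right hc (by nlinarith)
  have h2 : (0:ℝ) ≤ A ^ 2 / 4 * (1 - s) ^ 2 := by positivity
  nlinarith [h1, h2]
end
end
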